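/- arXiv:2301.02950 — 4 statements merged into one kernel-verified Lean document; each statement's English description precedes it below -/
import Mathlib

section
/- If n = |N| is a prime number, then for any coalitions S, T ⊊ N with S, T nonempty, the vectors η^S and η^T are not orthogonal, i.e., ⟨η^S, η^T⟩ ≠ 0. -/
open Finset

noncomputable def eta {N : Type*} [Fintype N] [DecidableEq N] (S : Finset N) : N → ℝ :=
  fun i => (if i ∈ S then (1 : ℝ) else 0) - (S.card : ℝ) / (Fintype.card N : ℝ)

theorem sum_eta_mul_eta {N : Type*} [Fintype N] [DecidableEq N] (S T : Finset N) :
    ∑ i, eta S i * eta T i = #(S ∩ T) - (#S * #T : ℝ) / Fintype.card N := by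
  rcases isEmpty_or_nonempty N with hN | hN
  · simp [univ_eq_empty, eq_empty_of_isEmpty S]
  have hn : (Fintype.card N : ℝ) ≠ 0 := by positivity
  simp only [eta, sub_mul, mul_sub, sum_sub_distrib, ite_mul, mul_ite, one_mul, mul_one,
    zero_mul, mul_zero, sum_ite_mem, univ_inter, sum_const, card_univ,
    nsmul_eq_mul, inter_comm T S]
  field_simp
  ring

theorem Nat.Prime.not_dvd_mul_of_pos_of_lt {p a b : ℕ} (hp : p.Prime) (ha : 0 < a) (hap : a < p)
    (hb : 0 < b) (hbp : b < p) : ¬ p ∣ a * b := by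
  rw [hp.dvd_mul]
  rintro (h | h)
  · exact (Nat.le_of_dvd ha h).not_gt hap
  · exact (Nat.le_of_dvd hb h).not_gt hbp

theorem stmt2 {N : Type*} [Fintype N] [DecidableEq N]
    (hp : (Fintype.card N).Prime)
    (S T : Finset N) (hS : S.Nonempty) (hSU : S ≠ Finset.univ)
    (hT : T.Nonempty) (hTU : T ≠ Finset.univ) :
    ∑ i, eta S i * eta T i ≠ 0 := by
  have hn : (Fintype.card N : ℝ) ≠ 0 := by exact_mod_cast hp.ne_zero
  rw [sum_eta_mul_eta, sub_ne_zero, ne_eq, eq_div_iff hn]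
  intro h
  refine hp.not_dvd_mul_of_pos_of_lt hS.card_pos ((card_lt_iff_ne_univ S).2 hSU)
    hT.card_pos ((card_lt_iff_ne_univ T).2 hTU) ⟨#(S ∩ T), ?_⟩
  exact_mod_cast h.symm.trans (mul_comm _ _)
end

section
/- (Peleg's first induction step) Let C = {S_1,…,S_k} be a minimal balanced collection on N with weights λ, let p ∉ N, and let I ⊆ {1,…,k} satisfy ∑_{i∈I} λ_{S_i} = 1. Then the collection C' = {S_i ∪ {p} : i ∈ I} ∪ {S_j : j ∉ I} is a minimal balanced collection on N ∪ {p}. -/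
/-!
Deleting `p` maps `C'` bijectively back onto `C`; the inverse adjoins `p` exactly to the
members of `I`. Transporting the weights, `T ↦ λ (T \ {p})` balances `C'`: each `i ∈ N` is
covered as in `C`, and `p` is covered with total weight `∑_{S ∈ I} λ S = 1`. Conversely,
deleting `p` turns a balanced proper subcollection of `C'` into a balanced proper
subcollection of `C`, which minimality of `C` forbids.
-/

open Finset

def IsBalancedOn {α : Type*} [DecidableEq α] (M : Finset α) (B : Finset (Finset α))
    (w : Finset α → ℝ) : Prop :=
  (∀ S ∈ B, S ⊆ M ∧ S.Nonempty) ∧ (∀ S ∈ B, 0 < w S) ∧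
  ∀ i ∈ M, ∑ S ∈ B, w S * (if i ∈ S then (1 : ℝ) else 0) = 1

def IsBalanced {α : Type*} [DecidableEq α] (M : Finset α) (B : Finset (Finset α)) : Prop :=
  ∃ w : Finset α → ℝ, IsBalancedOn M B w

def IsMinimalBalanced {α : Type*} [DecidableEq α] (M : Finset α)
    (B : Finset (Finset α)) : Prop :=
  IsBalanced M B ∧ ∀ B' ⊆ B, B' ≠ B → ¬ IsBalanced M B'

section

variable {α : Type*} [DecidableEq α]

theorem sum_image_mul_indicator {B : Finset (Finset α)} {f : Finset α → Finset α}
    (hf : Set.InjOn f B) {w w' : Finset α → ℝ} (hw : ∀ T ∈ B, w' (f T) = w T) (i : α) :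
    ∑ S ∈ B.image f, w' S * (if i ∈ S then (1 : ℝ) else 0) =
      ∑ T ∈ B, w T * if i ∈ f T then 1 else 0 := by
  rw [sum_image hf]
  exact sum_congr rfl fun T hT => by rw [hw T hT]

theorem IsBalancedOn.isBalanced_image_erase {p : α} {M : Finset α} {B : Finset (Finset α)}
    {w : Finset α → ℝ} (h : IsBalancedOn (insert p M) B w) (hp : p ∉ M)
    (hinj : Set.InjOn (Finset.erase · p) B) (hne : ∀ T ∈ B, (T.erase p).Nonempty) :
    IsBalanced M (B.image (·.erase p)) := by
  set w' : Finset α → ℝ := fun S => w (Function.invFunOn (·.erase p) B S)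
  have hw' : ∀ T ∈ B, w' (T.erase p) = w T := fun T hT =>
    congrArg w (hinj.leftInvOn_invFunOn hT)
  refine ⟨w', ?_, ?_, fun i hi => ?_⟩
  · simp only [forall_mem_image]
    exact fun T hT => ⟨subset_insert_iff.1 (h.1 T hT).1, hne T hT⟩
  · simp only [forall_mem_image]
    exact fun T hT => (hw' T hT).symm ▸ h.2.1 T hT
  · have hip : i ≠ p := ne_of_mem_of_not_mem hi hp
    rw [sum_image_mul_indicator hinj hw']
    simp only [mem_erase, ne_eq, hip, not_false_eq_true, true_and]
    exact h.2.2 i (mem_insert_of_mem hi)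

def insertIfMem (p : α) (I : Finset (Finset α)) (S : Finset α) : Finset α :=
  if S ∈ I then insert p S else S

variable {p i : α} {I C : Finset (Finset α)} {S : Finset α}

theorem subset_insertIfMem : S ⊆ insertIfMem p I S := by
  unfold insertIfMem; split_ifs
  exacts [subset_insert p S, Subset.rfl]

theorem insertIfMem_subset_insert : insertIfMem p I S ⊆ insert p S := by
  unfold insertIfMem; split_ifs
  exacts [Subset.rfl, subset_insert p S]

theorem erase_insertIfMem (hpS : p ∉ S) : (insertIfMem p I S).erase p = S := by
  unfold insertIfMem; split_ifs
  exacts [erase_insert hpS, erase_eq_of_notMem hpS]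

theorem mem_insertIfMem_of_ne (hip : i ≠ p) : i ∈ insertIfMem p I S ↔ i ∈ S := by
  unfold insertIfMem; split_ifs <;> simp [hip]

theorem mem_insertIfMem_self (hpS : p ∉ S) : p ∈ insertIfMem p I S ↔ S ∈ I := by
  unfold insertIfMem; split_ifs with h <;> simp [h, hpS]

theorem leftInvOn_erase_insertIfMem (hpC : ∀ S ∈ C, p ∉ S) :
    Set.LeftInvOn (·.erase p) (insertIfMem p I) C := fun S hS =>
  erase_insertIfMem (hpC S hS)

theorem image_insertIfMem (hI : I ⊆ C) :
    C.image (insertIfMem p I) = I.image (insert p ·) ∪ (C \ I) := by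
  nth_rewrite 1 [← union_sdiff_of_subset hI]
  rw [image_union]
  congr 1
  · exact image_congr fun S hS => if_pos hS
  · exact (image_congr fun S hS => if_neg (mem_sdiff.1 hS).2).trans image_id'

theorem IsBalancedOn.image_insertIfMem {N : Finset α} {lam : Finset α → ℝ}
    (hC : IsBalancedOn N C lam) (hp : p ∉ N) (hI : I ⊆ C) (hsum : ∑ S ∈ I, lam S = 1) :
    IsBalancedOn (insert p N) (C.image (insertIfMem p I)) (fun T => lam (T.erase p)) := by
  have hpC : ∀ S ∈ C, p ∉ S := fun S hS hpS => hp ((hC.1 S hS).1 hpS)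
  have hw : ∀ S ∈ C, lam ((insertIfMem p I S).erase p) = lam S := fun S hS => by
    rw [erase_insertIfMem (hpC S hS)]
  refine ⟨?_, ?_, fun i hi => ?_⟩
  · simp only [forall_mem_image]
    exact fun S hS => ⟨insertIfMem_subset_insert.trans (insert_subset_insert p (hC.1 S hS).1),
      (hC.1 S hS).2.mono subset_insertIfMem⟩
  · simp only [forall_mem_image]
    exact fun S hS => (hw S hS).symm ▸ hC.2.1 S hS
  · rw [sum_image_mul_indicator (leftInvOn_erase_insertIfMem hpC).injOn hw]
    rcases mem_insert.1 hi with rfl | hiN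
    · calc ∑ S ∈ C, lam S * (if i ∈ insertIfMem i I S then 1 else 0)
          = ∑ S ∈ C, if S ∈ I then lam S else 0 :=
            sum_congr rfl fun S hS => by simp [mem_insertIfMem_self (hpC S hS)]
        _ = 1 := by rw [sum_ite_mem, inter_eq_right.2 hI, hsum]
    · have hip : i ≠ p := ne_of_mem_of_not_mem hiN hp
      simp only [mem_insertIfMem_of_ne hip]
      exact hC.2.2 i hiN

theorem IsMinimalBalanced.not_isBalanced_of_ssubset_image_insertIfMem {N : Finset α}
    (hmin : IsMinimalBalanced N C) (hp : p ∉ N) {B : Finset (Finset α)}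
    (hB : B ⊂ C.image (insertIfMem p I)) : ¬ IsBalanced (insert p N) B := by
  rintro ⟨w, hw⟩
  obtain ⟨lam, hC⟩ := hmin.1
  have hinv : Set.LeftInvOn (·.erase p) (insertIfMem p I) C :=
    leftInvOn_erase_insertIfMem fun S hS hpS => hp ((hC.1 S hS).1 hpS)
  have hinj : Set.InjOn (Finset.erase · p) B :=
    (Set.LeftInvOn.injOn hinv.rightInvOn_image).mono (by exact_mod_cast hB.subset)
  have hsub : B.image (·.erase p) ⊆ C :=
    calc B.image (·.erase p) ⊆ (C.image (insertIfMem p I)).image (·.erase p) :=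
          image_subset_image hB.subset
      _ = C := by rw [image_image, image_congr hinv.eqOn, image_id]
  have hcard : #(B.image (·.erase p)) < #C := by
    rw [card_image_of_injOn hinj, ← card_image_of_injOn hinv.injOn]
    exact card_lt_card hB
  exact hmin.2 _ hsub (ne_of_apply_ne card hcard.ne) <|
    hw.isBalanced_image_erase hp hinj fun T hT => (hC.1 _ (hsub (mem_image_of_mem _ hT))).2

end

theorem stmt11 {α : Type*} [DecidableEq α]
    (N : Finset α) (p : α) (hp : p ∉ N)
    (C : Finset (Finset α)) (lam : Finset α → ℝ)
    (hC : IsBalancedOn N C lam) (hmin : IsMinimalBalanced N C)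
    (I : Finset (Finset α)) (hI : I ⊆ C) (hsum : ∑ S ∈ I, lam S = 1) :
    IsMinimalBalanced (insert p N) ((I.image (insert p ·)) ∪ (C \ I)) := by
  rw [← image_insertIfMem hI]
  exact ⟨⟨_, hC.image_insertIfMem hp hI hsum⟩, fun B hB hne =>
    hmin.not_isBalanced_of_ssubset_image_insertIfMem hp (ssubset_of_subset_of_ne hB hne)⟩
end

section
/- (Characterization of unbalanced collections) A collection Q of nonempty proper subsets of N contains no balanced subcollection if and only if there exists a vector σ ∈ ℝ^N with σ(N) = 0 such that σ(S) > 0 for every S ∈ Q. -/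
open Finset

section Aux

variable {N : Type*} [Fintype N] [DecidableEq N]

private noncomputable def ind (S : Finset N) : N → ℝ := fun i => if i ∈ S then 1 else 0

private lemma sum_ind (S : Finset N) : ∑ i, ind S i = (S.card : ℝ) := by
  simp [ind]

private lemma ind_eq_sum_single (S : Finset N) :
    ind S = ∑ i ∈ S, Pi.single i (1 : ℝ) := by
  funext j
  simp only [Finset.sum_apply, Pi.single_apply, ind]
  rw [Finset.sum_ite_eq S j (fun _ => (1 : ℝ))]

variable (Q : Finset (Finset N))

private def coneC : Set (N → ℝ) :=
  {x | ∃ lam : Finset N → ℝ, (∀ S ∈ Q, 0 ≤ lam S) ∧ x = ∑ S ∈ Q, lam S • ind S}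

private lemma zero_mem_coneC : (0 : N → ℝ) ∈ coneC Q :=
  ⟨0, fun _ _ => le_refl _, by simp⟩

private lemma smul_mem_coneC {t : ℝ} (ht : 0 ≤ t) {x : N → ℝ} (hx : x ∈ coneC Q) :
    t • x ∈ coneC Q := by
  obtain ⟨lam, hlam, rfl⟩ := hx
  exact ⟨fun S => t * lam S, fun S hS => mul_nonneg ht (hlam S hS), by
    rw [Finset.smul_sum]; exact Finset.sum_congr rfl fun S _ => by simp [mul_smul]⟩

private lemma convex_coneC : Convex ℝ (coneC Q) := by
  intro x hx y hy a b ha hb _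
  obtain ⟨lx, hlx, rfl⟩ := hx
  obtain ⟨ly, hly, rfl⟩ := hy
  refine ⟨fun S => a * lx S + b * ly S,
    fun S hS => add_nonneg (mul_nonneg ha (hlx S hS)) (mul_nonneg hb (hly S hS)), ?_⟩
  rw [Finset.smul_sum, Finset.smul_sum, ← Finset.sum_add_distrib]
  exact Finset.sum_congr rfl fun S _ => by rw [add_smul, mul_smul, mul_smul]

private lemma sum_coords (lam : Finset N → ℝ) :
    ∑ i, (∑ S ∈ Q, lam S • ind S) i = ∑ S ∈ Q, lam S * (S.card : ℝ) := by
  simp only [Finset.sum_apply, Pi.smul_apply, smul_eq_mul]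
  rw [Finset.sum_comm]
  exact Finset.sum_congr rfl fun S _ => by rw [← Finset.mul_sum, sum_ind]

/-- The map sending weights to the corresponding combination of indicator vectors. -/
private noncomputable def phi : (Finset N → ℝ) → (N → ℝ) :=
  fun lam => ∑ S ∈ Q, lam S • ind S

private lemma continuous_phi : Continuous (phi Q) := by
  apply continuous_finset_sum
  intro S _
  exact (continuous_apply S).smul continuous_const

private lemma isClosed_coneC (hQ : ∀ S ∈ Q, S.Nonempty) : IsClosed (coneC Q) := by
  rw [← closure_subset_iff_isClosed]
  intro x hx
  set r : ℝ := ∑ i, x i + 1 with hr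
  -- the compact slice
  have hIcc : IsCompact (Set.Icc (0 : Finset N → ℝ) (fun _ => max r 0)) := isCompact_Icc
  have himg : IsCompact ((phi Q) '' Set.Icc 0 (fun _ => max r 0)) :=
    hIcc.image (continuous_phi Q)
  have hU : IsOpen {y : N → ℝ | ∑ i, y i < r} := by
    have : Continuous fun y : N → ℝ => ∑ i, y i :=
      continuous_finset_sum _ fun i _ => continuous_apply i
    exact isOpen_lt this continuous_const
  have hxU : x ∈ {y : N → ℝ | ∑ i, y i < r} := by simp [hr]
  -- the slice of the cone is inside the compact image
  have hsub : {y : N → ℝ | ∑ i, y i < r} ∩ coneC Q ⊆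
      (phi Q) '' Set.Icc 0 (fun _ => max r 0) := by
    rintro y ⟨hyr, lam, hlam, rfl⟩
    refine ⟨fun S => if S ∈ Q then lam S else 0, ?_, ?_⟩
    · constructor
      · intro S
        by_cases hS : S ∈ Q <;> simp [hS]
        exact hlam S hS
      · intro S
        by_cases hS : S ∈ Q
        · simp only [hS, if_true]
          refine le_max_of_le_left ?_
          have hy := sum_coords Q lam
          have hcard : (1 : ℝ) ≤ (S.card : ℝ) := by
            exact_mod_cast (hQ S hS).card_pos
          have h1 : lam S ≤ lam S * (S.card : ℝ) := by
            nlinarith [hlam S hS]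
          have h2 : lam S * (S.card : ℝ) ≤ ∑ T ∈ Q, lam T * (T.card : ℝ) :=
            Finset.single_le_sum (f := fun T => lam T * (T.card : ℝ))
              (fun T hT => mul_nonneg (hlam T hT) (by positivity)) hS
          have hyr' : ∑ i, (∑ S ∈ Q, lam S • ind S) i < r := hyr
          linarith
        · simp [hS, le_max_right]
    · unfold phi
      exact (Finset.sum_congr rfl fun S hS => by simp [hS]).symm
  -- conclude
  have hx' : x ∈ closure ({y : N → ℝ | ∑ i, y i < r} ∩ coneC Q) :=
    hU.inter_closure ⟨hxU, hx⟩
  have : x ∈ (phi Q) '' Set.Icc 0 (fun _ => max r 0) := by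
    have hcl : IsClosed ((phi Q) '' Set.Icc 0 (fun _ => max r 0)) := himg.isClosed
    exact hcl.closure_subset ((closure_mono hsub) hx')
  obtain ⟨lam, hlam, rfl⟩ := this
  exact ⟨lam, fun S _ => hlam.1 S, rfl⟩

end Aux

theorem stmt14 {N : Type*} [Fintype N] [DecidableEq N] [Nonempty N]
    (Q : Finset (Finset N))
    (hQ : ∀ S ∈ Q, S.Nonempty ∧ S ≠ Finset.univ) :
    (¬ ∃ B ⊆ Q, ∃ lam : Finset N → ℝ, (∀ S ∈ B, 0 < lam S) ∧
        ∀ i : N, ∑ S ∈ B, lam S * (if i ∈ S then (1 : ℝ) else 0) = 1)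
    ↔ ∃ σ : N → ℝ, (∑ i, σ i = 0) ∧ ∀ S ∈ Q, 0 < ∑ i ∈ S, σ i := by
  constructor
  · -- hard direction
    intro hL
    have hQne : ∀ S ∈ Q, S.Nonempty := fun S hS => (hQ S hS).1
    -- the all-ones vector is not in the cone
    have hone : (fun _ => (1 : ℝ)) ∉ coneC Q := by
      rintro ⟨lam, hlam, hsum⟩
      apply hL
      refine ⟨Q.filter (fun S => 0 < lam S), Finset.filter_subset _ _, lam,
        fun S hS => (Finset.mem_filter.mp hS).2, fun i => ?_⟩
      have h1 : ∑ S ∈ Q, lam S * (if i ∈ S then (1 : ℝ) else 0) = 1 := by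
        have := congrFun hsum i
        simpa [ind, Finset.sum_apply] using this.symm
      have h2 : ∑ S ∈ Q.filter (fun S => 0 < lam S), lam S * (if i ∈ S then (1 : ℝ) else 0)
          = ∑ S ∈ Q, lam S * (if i ∈ S then (1 : ℝ) else 0) := by
        apply Finset.sum_filter_of_ne
        intro S hS hne
        rcases lt_or_eq_of_le (hlam S hS) with h | h
        · exact h
        · exact absurd (by rw [← h, zero_mul]) hne
      rw [h2]; exact h1
    -- separate
    obtain ⟨f, u, hfu, hub⟩ :=
      geometric_hahn_banach_closed_point (convex_coneC Q) (isClosed_coneC Q hQne) hone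
    have hu0 : 0 < u := by
      have := hfu 0 (zero_mem_coneC Q)
      simpa using this
    -- f is nonpositive on the cone
    have hfC : ∀ x ∈ coneC Q, f x ≤ 0 := by
      intro x hx
      by_contra h
      push_neg at h
      have ht : (0 : ℝ) ≤ (u + 1) / f x := by positivity
      have := hfu _ (smul_mem_coneC Q ht hx)
      rw [map_smul, smul_eq_mul, div_mul_cancel₀ _ (ne_of_gt h)] at this
      linarith
    -- indicator of S ∈ Q is in the cone
    have hindC : ∀ S ∈ Q, ind S ∈ coneC Q := by
      intro S hS
      refine ⟨fun T => if T = S then 1 else 0, fun T _ => by positivity, ?_⟩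
      rw [Finset.sum_eq_single S (fun T _ hT => by simp [hT]) (fun h => absurd hS h)]
      simp
    -- define sigma
    set g : N → ℝ := fun i => f (Pi.single i 1) with hg
    have hfx : ∀ x : N → ℝ, f x = ∑ i, x i * g i := by
      intro x
      conv_lhs => rw [pi_eq_sum_univ x]
      rw [map_sum]
      refine Finset.sum_congr rfl fun i _ => ?_
      rw [map_smul, smul_eq_mul]
      congr 1
      congr 1
      funext j
      simp [Pi.single_apply, eq_comm]
    have hfind : ∀ S : Finset N, f (ind S) = ∑ i ∈ S, g i := by
      intro S
      rw [ind_eq_sum_single, map_sum]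
    have hfone : f (fun _ => (1 : ℝ)) = ∑ i, g i := by
      have : (fun _ => (1 : ℝ)) = ind (Finset.univ : Finset N) := by
        funext i; simp [ind]
      rw [this, hfind]
    set n : ℝ := (Fintype.card N : ℝ) with hn
    have hnpos : (0 : ℝ) < n := by
      simp [hn, Fintype.card_pos]
    have hb : 0 < ∑ i, g i := by
      rw [← hfone]; linarith [hub, hu0]
    refine ⟨fun i => (∑ j, g j) / n - g i, ?_, ?_⟩
    · rw [Finset.sum_sub_distrib, Finset.sum_const, Finset.card_univ, nsmul_eq_mul]
      field_simp
      rw [hn]; ring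
    · intro S hS
      rw [Finset.sum_sub_distrib, Finset.sum_const, nsmul_eq_mul]
      have h1 : ∑ i ∈ S, g i ≤ 0 := by
        rw [← hfind]; exact hfC _ (hindC S hS)
      have hcard : (1 : ℝ) ≤ (S.card : ℝ) := by
        exact_mod_cast (hQ S hS).1.card_pos
      have : 0 < (S.card : ℝ) * ((∑ j, g j) / n) := mul_pos (by linarith) (div_pos hb hnpos)
      linarith
  · -- easy direction
    rintro ⟨σ, hσ0, hσQ⟩ ⟨B, hBQ, lam, hpos, hsum⟩
    have hBne : B.Nonempty := by
      by_contra h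
      rw [Finset.not_nonempty_iff_eq_empty] at h
      have := hsum (Classical.arbitrary N)
      simp [h] at this
    have key : ∑ i, σ i = ∑ S ∈ B, lam S * ∑ i ∈ S, σ i := by
      calc ∑ i, σ i = ∑ i, σ i * ∑ S ∈ B, lam S * (if i ∈ S then (1 : ℝ) else 0) := by
            exact Finset.sum_congr rfl fun i _ => by rw [hsum i, mul_one]
        _ = ∑ i, ∑ S ∈ B, σ i * (lam S * (if i ∈ S then (1 : ℝ) else 0)) := by
            exact Finset.sum_congr rfl fun i _ => Finset.mul_sum _ _ _
        _ = ∑ S ∈ B, ∑ i, σ i * (lam S * (if i ∈ S then (1 : ℝ) else 0)) :=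
            Finset.sum_comm
        _ = ∑ S ∈ B, lam S * ∑ i ∈ S, σ i := by
            refine Finset.sum_congr rfl fun S _ => ?_
            simp only [mul_ite, mul_one, mul_zero]
            rw [Finset.sum_ite_mem, Finset.univ_inter, Finset.mul_sum]
            exact Finset.sum_congr rfl fun i _ => mul_comm _ _
    have hpos' : 0 < ∑ S ∈ B, lam S * ∑ i ∈ S, σ i := by
      apply Finset.sum_pos
      · intro S hS
        exact mul_pos (hpos S hS) (hσQ S (hBQ hS))
      · exact hBne
    rw [hσ0] at key
    linarith
end

section
/- Every maximal unbalanced collection on N contains exactly one member of each pair {S, N∖S} of complementary nonempty proper subsets; in particular every maximal unbalanced collection has cardinality 2^{n-1} - 1. -/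
/-!
`Q` contains a balanced subcollection iff some `w ≥ 0` on `Q` satisfies `∑ w_S 1^S = 1^N`
(take the support of `w`). A collection containing `S` and `Sᶜ` is balanced.
Conversely, if both `Q ∪ {S}` and `Q ∪ {Sᶜ}` carry such weights `w₁`, `w₂`, with `a = w₁ S` and
`b = w₂ Sᶜ`, then `b • w₁ + a • w₂` covers every element exactly `a + b - ab` times using members
of `Q` only, so rescaling balances `Q`. Hence a maximal unbalanced collection picks exactly one set
from each complementary pair; adding `N` it picks one from each of the `2^(n-1)` pairs of all
subsets.
-/

open Finset

def Unbalanced {N : Type*} [Fintype N] [DecidableEq N] (Q : Finset (Finset N)) : Prop :=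
  ¬ ∃ B ⊆ Q, ∃ lam : Finset N → ℝ, (∀ S ∈ B, 0 < lam S) ∧
      ∀ i : N, ∑ S ∈ B, lam S * (if i ∈ S then (1 : ℝ) else 0) = 1

theorem Finset.two_mul_card_eq_of_mem_iff_compl_notMem {α : Type*} [BooleanAlgebra α] [Fintype α]
    [DecidableEq α] {s : Finset α} (h : ∀ a, a ∈ s ↔ aᶜ ∉ s) :
    2 * #s = Fintype.card α := by
  have hdisj : Disjoint s (s.map ⟨compl, compl_injective⟩) := by
    rw [disjoint_left]
    intro a ha hac
    obtain ⟨b, hb, rfl⟩ := mem_map.1 hac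
    exact (h b).1 hb ha
  have hcover : s.disjUnion _ hdisj = univ := by
    refine eq_univ_of_forall fun a => ?_
    by_cases ha : a ∈ s
    · exact mem_disjUnion.2 (Or.inl ha)
    · exact mem_disjUnion.2 <| Or.inr <| mem_map.2 ⟨aᶜ, not_not.1 (mt (h a).2 ha), compl_compl a⟩
  rw [← card_univ, ← hcover, card_disjUnion, card_map, two_mul]

theorem Finset.card_eq_two_pow_sub_one_of_mem_iff_compl_notMem {N : Type*} [Fintype N]
    [DecidableEq N] [Nonempty N] {Q : Finset (Finset N)}
    (hQ : ∀ S ∈ Q, S.Nonempty ∧ S ≠ univ)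
    (h : ∀ S : Finset N, S.Nonempty → S ≠ univ → (S ∈ Q ↔ Sᶜ ∉ Q)) :
    #Q = 2 ^ (Fintype.card N - 1) - 1 := by
  have huniv : univ ∉ Q := fun hu => (hQ univ hu).2 rfl
  have hempty : ∅ ∉ Q := fun he => (hQ ∅ he).1.ne_empty rfl
  have empty_ne_univ : (∅ : Finset N) ≠ univ := univ_nonempty.ne_empty.symm
  have hcard := two_mul_card_eq_of_mem_iff_compl_notMem (s := insert univ Q) fun S => by
    rcases S.eq_empty_or_nonempty with rfl | hS
    · simp [hempty, empty_ne_univ]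
    by_cases hSu : S = univ
    · simp [hSu, hempty, empty_ne_univ]
    have hSc : Sᶜ ≠ univ := (compl_ne_univ_iff_nonempty S).2 hS
    simpa [hSu, hSc] using h S hS hSu
  rw [card_insert_of_notMem huniv, Fintype.card_finset] at hcard
  have hpow : 2 ^ Fintype.card N = 2 * 2 ^ (Fintype.card N - 1) := by
    rw [← pow_succ', Nat.sub_add_cancel Fintype.card_pos]
  omega

section Balancing

variable {N : Type*} [DecidableEq N]

def IsBalancingWeight (Q : Finset (Finset N)) (w : Finset N → ℝ) : Prop :=
  (∀ S ∈ Q, 0 ≤ w S) ∧ ∀ i, ∑ S ∈ Q, w S * (if i ∈ S then 1 else 0) = 1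

theorem IsBalancingWeight.le_one {Q : Finset (Finset N)} {w : Finset N → ℝ}
    (hw : IsBalancingWeight Q w) {S : Finset N} (hS : S ∈ Q) (hne : S.Nonempty) : w S ≤ 1 := by
  obtain ⟨i, hi⟩ := hne
  calc w S = w S * (if i ∈ S then 1 else 0) := by rw [if_pos hi, mul_one]
    _ ≤ ∑ T ∈ Q, w T * (if i ∈ T then 1 else 0) :=
      single_le_sum (f := fun T => w T * if i ∈ T then 1 else 0)
        (fun T hT => mul_nonneg (hw.1 T hT) (by split_ifs <;> norm_num)) hS
    _ = 1 := hw.2 i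

theorem IsBalancingWeight.of_insert {Q : Finset (Finset N)} {w : Finset N → ℝ} {S : Finset N}
    (hw : IsBalancingWeight (insert S Q) w) (hS : S ∉ Q) (h0 : w S = 0) :
    IsBalancingWeight Q w :=
  ⟨fun T hT => hw.1 T (mem_insert_of_mem hT), fun i => by
    simpa only [sum_insert hS, h0, zero_mul, zero_add] using hw.2 i⟩

variable [Fintype N] {Q : Finset (Finset N)}

theorem not_unbalanced_iff_exists_isBalancingWeight :
    ¬ Unbalanced Q ↔ ∃ w, IsBalancingWeight Q w := by
  rw [Unbalanced, not_not]
  constructor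
  · rintro ⟨B, hBQ, lam, hpos, hsum⟩
    refine ⟨fun S => if S ∈ B then lam S else 0, fun S _ => ?_, fun i => ?_⟩
    · dsimp only
      split_ifs with hS
      exacts [(hpos S hS).le, le_rfl]
    · simp only [ite_mul, zero_mul]
      rw [← sum_filter, filter_mem_eq_inter, inter_eq_right.2 hBQ, hsum i]
  · rintro ⟨w, hnn, hsum⟩
    refine ⟨Q.filter (0 < w ·), filter_subset _ _, w, fun S hS => (mem_filter.1 hS).2,
      fun i => ?_⟩
    rw [sum_filter_of_ne (f := fun S => w S * if i ∈ S then 1 else 0) fun S hS hne =>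
      lt_of_le_of_ne (hnn S hS) (left_ne_zero_of_mul hne).symm, hsum i]

theorem Unbalanced.compl_notMem (hQ : Unbalanced Q) {S : Finset N} (hS : S ∈ Q) : Sᶜ ∉ Q := by
  intro hSc
  refine hQ ⟨{S, Sᶜ}, insert_subset hS (singleton_subset_iff.2 hSc), fun _ => 1,
    fun _ _ => one_pos, fun i => ?_⟩
  have hne : S ≠ Sᶜ := fun h => by simpa using congrArg (i ∈ ·) h
  by_cases hi : i ∈ S <;> simp [sum_pair hne, hi]

theorem Unbalanced.insert_or_insert_compl (hQ : Unbalanced Q) {S : Finset N} (hS : S.Nonempty) :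
    Unbalanced (insert S Q) ∨ Unbalanced (insert Sᶜ Q) := by
  by_contra! h
  obtain ⟨⟨w₁, hw₁⟩, ⟨w₂, hw₂⟩⟩ := And.imp not_unbalanced_iff_exists_isBalancingWeight.1
    not_unbalanced_iff_exists_isBalancingWeight.1 h
  have hSQ : S ∉ Q := fun h' => h.1 (by rwa [insert_eq_of_mem h'])
  have hScQ : Sᶜ ∉ Q := fun h' => h.2 (by rwa [insert_eq_of_mem h'])
  set a := w₁ S
  set b := w₂ Sᶜ
  have ha : 0 < a := lt_of_le_of_ne (hw₁.1 S (mem_insert_self _ _)) fun h0 =>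
    not_unbalanced_iff_exists_isBalancingWeight.2 ⟨w₁, hw₁.of_insert hSQ h0.symm⟩ hQ
  have ha1 : a ≤ 1 := hw₁.le_one (mem_insert_self _ _) hS
  have hb : 0 ≤ b := hw₂.1 _ (mem_insert_self _ _)
  have hc : 0 < a + b - a * b := by nlinarith
  refine not_unbalanced_iff_exists_isBalancingWeight.2
    ⟨fun T => (b * w₁ T + a * w₂ T) / (a + b - a * b), fun T hT => ?_, fun i => ?_⟩ hQ
  · exact div_nonneg (add_nonneg (mul_nonneg hb (hw₁.1 T (mem_insert_of_mem hT)))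
      (mul_nonneg ha.le (hw₂.1 T (mem_insert_of_mem hT)))) hc.le
  · have e₁ := hw₁.2 i
    have e₂ := hw₂.2 i
    rw [sum_insert hSQ] at e₁
    rw [sum_insert hScQ] at e₂
    simp only [div_mul_eq_mul_div, add_mul, mul_assoc, ← sum_div, sum_add_distrib, ← mul_sum]
    rw [div_eq_one_iff_eq hc.ne']
    by_cases hi : i ∈ S <;>
      simp only [hi, mem_compl, not_true_eq_false, not_false_eq_true, ↓reduceIte] at e₁ e₂ <;>
      linear_combination b * e₁ + a * e₂

end Balancing

theorem stmt15 {N : Type*} [Fintype N] [DecidableEq N] (hn : 2 ≤ Fintype.card N)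
    (Q : Finset (Finset N))
    (hQ : ∀ S ∈ Q, S.Nonempty ∧ S ≠ Finset.univ)
    (hunb : Unbalanced Q)
    (hmax : ∀ Q' : Finset (Finset N), Q ⊆ Q' →
      (∀ S ∈ Q', S.Nonempty ∧ S ≠ Finset.univ) → Unbalanced Q' → Q' = Q) :
    (∀ S : Finset N, S.Nonempty → S ≠ Finset.univ →
      (S ∈ Q ↔ Finset.univ \ S ∉ Q)) ∧
    Q.card = 2 ^ (Fintype.card N - 1) - 1 := by
  have : Nonempty N := Fintype.card_pos_iff.1 (by omega)
  have mem_of_unbalanced_insert : ∀ T : Finset N, T.Nonempty → T ≠ univ →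
      Unbalanced (insert T Q) → T ∈ Q := fun T hT hTu h =>
    hmax _ (subset_insert T Q) ((forall_mem_insert _ _ _).2 ⟨⟨hT, hTu⟩, hQ⟩) h ▸
      mem_insert_self T Q
  have hcompl : ∀ S : Finset N, S.Nonempty → S ≠ univ → (S ∈ Q ↔ Sᶜ ∉ Q) := by
    intro S hS hSu
    refine ⟨hunb.compl_notMem, fun hSc => ?_⟩
    rcases hunb.insert_or_insert_compl hS with h | h
    · exact mem_of_unbalanced_insert S hS hSu h
    · exact absurd (mem_of_unbalanced_insert Sᶜ
        (nonempty_iff_ne_empty.2 ((compl_eq_empty_iff S).not.2 hSu))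
        ((compl_ne_univ_iff_nonempty S).2 hS) h) hSc
  exact ⟨by simpa only [compl_eq_univ_sdiff] using hcompl,
    card_eq_two_pow_sub_one_of_mem_iff_compl_notMem hQ hcompl⟩
end
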